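/- For any graph G and any spider graph H whose center vertex has degree k with 3 ≤ k ≤ 4, μ_int(G ⊙ H) ≤ max{2, μ_int(G)}. -/

import Mathlib

/-- An (improper) interval edge coloring: for every vertex, the set of colors on
incident edges forms an interval of consecutive integers. -/
def IsIntervalColoring {V : Type*} (G : SimpleGraph V) (c : Sym2 V → ℤ) : Prop :=
  ∀ v : V, ∀ a b x : ℤ,
    (∃ u, G.Adj v u ∧ c s(v, u) = a) → (∃ u, G.Adj v u ∧ c s(v, u) = b) →
    a ≤ x → x ≤ b → ∃ u, G.Adj v u ∧ c s(v, u) = x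

/-- A coloring is `k`-improper if at every vertex each color appears on at most
`k` incident edges. -/
def IsKImproper {V : Type*} (G : SimpleGraph V) (c : Sym2 V → ℤ) (k : ℕ) : Prop :=
  ∀ v : V, ∀ q : ℤ, ({u : V | G.Adj v u ∧ c s(v, u) = q}).ncard ≤ k

/-- The interval coloring impropriety `μ_int(G)`: the least `k` such that `G`
admits a `k`-improper interval edge coloring. -/
noncomputable def impropriety {V : Type*} (G : SimpleGraph V) : ℕ :=
  sInf {k : ℕ | ∃ c : Sym2 V → ℤ, IsIntervalColoring G c ∧ IsKImproper G c k}

/-- The maximum degree of a graph. -/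
noncomputable def maxDeg {V : Type*} (G : SimpleGraph V) : ℕ :=
  sSup {d : ℕ | ∃ v : V, (G.neighborSet v).ncard = d}

/-- The corona product `G ⊙ H`: take `G` and one copy of `H` for every vertex
of `G`, joining each vertex `v` of `G` to all vertices of its copy of `H`. -/
def corona {V W : Type*} (G : SimpleGraph V) (H : SimpleGraph W) :
    SimpleGraph (V ⊕ V × W) where
  Adj x y :=
    match x, y with
    | Sum.inl u, Sum.inl v => G.Adj u v
    | Sum.inl u, Sum.inr p => u = p.1
    | Sum.inr p, Sum.inl u => u = p.1
    | Sum.inr p, Sum.inr q => p.1 = q.1 ∧ H.Adj p.2 q.2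
  symm := by
    constructor
    rintro (u | p) (v | q) h
    · exact h.symm
    · exact h
    · exact h
    · exact ⟨h.1.symm, h.2.symm⟩
  loopless := by
    constructor
    rintro (u | p) h
    · exact G.irrefl h
    · exact H.irrefl h.2

/-- `H` is a spider graph with center `c` of degree `k`: a tree in which `c` has
degree `k ≥ 3` and every other vertex has degree at most 2. -/
def IsSpider {W : Type*} (H : SimpleGraph W) (c : W) (k : ℕ) : Prop :=
  H.IsTree ∧ (H.neighborSet c).ncard = k ∧ 3 ≤ k ∧
    ∀ w : W, w ≠ c → (H.neighborSet w).ncard ≤ 2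


/-!
The corona `G ⊙ H` is `G` with a copy of the cone `K₁ ⊙ H` attached at every vertex `v`. Take
optimal colorings of `G` and of the cone and shift the colors of the copy at `v` so that the colors
at its apex start right after the largest color of `G` at `v`. The two intervals at `v` then join
into one, and they share no color, so `μ_int(G ⊙ H) ≤ max (μ_int G) (μ_int (K₁ ⊙ H))`.

For a spider whose center has degree at most `4`, the cone has a `2`-improper interval coloring.
Give the legs distinct types `0, 1, 2, 3` and label the vertex at depth `n` on a leg of these
types by `n - 1`, `n`, `-n`, `-n - 1`, and the center by `0`. Color the apex edge of a vertex, and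
the edge to its parent, by its label. A vertex other than the center then sees its own label twice
and its child's label, which is one more or one less. The center sees `0` twice and `1, -1, -2`.
The apex sees every label, and the labels form an interval in which each value occurs at most twice.
-/

open SimpleGraph Set

theorem Int.ordConnected_of_sub_sign_mem {S : Set ℤ} (h0 : 0 ∈ S)
    (hS : ∀ a ∈ S, a - a.sign ∈ S) : S.OrdConnected := by
  have between : ∀ n : ℕ, ∀ a ∈ S, a.natAbs = n →
      ∀ x, 0 ≤ x ∧ x ≤ a ∨ a ≤ x ∧ x ≤ 0 → x ∈ S := by
    intro n
    induction n with
    | zero =>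
      intro a _ ha x hx
      obtain rfl : x = 0 := by omega
      exact h0
    | succ n ih =>
      intro a haS ha x hx
      rcases eq_or_ne x a with rfl | hxa
      · exact haS
      refine ih _ (hS a haS) ?_ x ?_ <;>
        rcases lt_trichotomy a 0 with h | rfl | h <;>
        simp_all [Int.sign_eq_neg_one_of_neg, Int.sign_eq_one_of_pos] <;> omega
  refine ⟨fun a ha b hb x hx => ?_⟩
  rcases le_or_gt 0 x with h | h
  · exact between _ b hb rfl x (Or.inl ⟨h, hx.2⟩)
  · exact between _ a ha rfl x (Or.inr ⟨hx.1, h.le⟩)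

theorem Int.ordConnected_union {S T : Set ℤ} (hS : S.OrdConnected) (hT : T.OrdConnected)
    (hlt : ∀ a ∈ S, ∀ b ∈ T, a < b) (hgap : S.Nonempty → T.Nonempty → ∃ a ∈ S, a + 1 ∈ T) :
    (S ∪ T).OrdConnected := by
  refine ⟨?_⟩
  rintro x (hx | hx) y (hy | hy) z hz
  · exact Or.inl (hS.out hx hy hz)
  · obtain ⟨a, haS, haT⟩ := hgap ⟨x, hx⟩ ⟨y, hy⟩
    rcases le_or_gt z a with h | h
    · exact Or.inl (hS.out hx haS ⟨hz.1, h⟩)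
    · exact Or.inr (hT.out haT hy ⟨h, hz.2⟩)
  · have := hlt y hy x hx; have := hz.1.trans hz.2; omega
  · exact Or.inr (hT.out hx hy hz)

theorem Int.ordConnected_of_mem_of_subset_Icc {S : Set ℤ} {a : ℤ} (ha : a ∈ S)
    (hS : S ⊆ Icc (a - 1) (a + 1)) : S.OrdConnected := by
  refine ⟨fun x hx y hy z hz => ?_⟩
  have := hS hx; have := hS hy; simp only [mem_Icc] at *
  rcases (by omega : z = a ∨ z = x ∨ z = y) with rfl | rfl | rfl <;> assumption

theorem Set.Finite.exists_injOn_fin_apply_eq {α : Type*} {s : Set α} {n : ℕ} (hs : s.Finite)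
    (hn : s.ncard ≤ n) (a : α) (i : Fin n) : ∃ f : α → Fin n, s.InjOn f ∧ f a = i := by
  have : Nonempty (Fin n) := ⟨i⟩
  obtain ⟨f, -, hf⟩ := hs.exists_injOn_of_encard_le (t := (univ : Set (Fin n)))
    (by rw [← hs.cast_ncard_eq, encard_univ]; simpa using hn)
  exact ⟨Equiv.swap (f a) i ∘ f, (Equiv.injective _).comp_injOn hf, Equiv.swap_apply_left _ _⟩

section IntervalColoring

variable {V : Type*} (G : SimpleGraph V) (c : Sym2 V → ℤ)

def colorNeighbors (v : V) (q : ℤ) : Set V := {u | G.Adj v u ∧ c s(v, u) = q}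

def colorsAt (v : V) : Set ℤ := {q | (colorNeighbors G c v q).Nonempty}

theorem isIntervalColoring_iff_ordConnected :
    IsIntervalColoring G c ↔ ∀ v, (colorsAt G c v).OrdConnected :=
  ⟨fun h v => ⟨fun _ ha _ hb _ hx => h v _ _ _ ha hb hx.1 hx.2⟩,
    fun h v _ _ _ ha hb hax hxb => (h v).out ha hb ⟨hax, hxb⟩⟩

theorem impropriety_le {k : ℕ} (hc : IsIntervalColoring G c) (hk : IsKImproper G c k) :
    impropriety G ≤ k :=
  Nat.sInf_le ⟨c, hc, hk⟩

theorem exists_isIntervalColoring_isKImproper_impropriety [Finite V] :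
    ∃ c, IsIntervalColoring G c ∧ IsKImproper G c (impropriety G) := by
  refine Nat.sInf_mem (s := {k | ∃ c, IsIntervalColoring G c ∧ IsKImproper G c k}) ?_
  refine ⟨Nat.card V, fun _ => 0, ?_, fun v q => ncard_le_card _⟩
  rintro v a b x ⟨u, hu, rfl⟩ ⟨_, _, rfl⟩ hax hxb
  exact ⟨u, hu, by dsimp only at *; omega⟩

theorem finite_colorsAt [Finite V] (v : V) : (colorsAt G c v).Finite :=
  (finite_range fun u => c s(v, u)).subset fun _ ⟨u, _, hu⟩ => ⟨u, hu⟩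

end IntervalColoring

section Corona

variable {V W : Type*} {G : SimpleGraph V} {H : SimpleGraph W}

/-- The cone `K₁ ⊙ H`, with apex `.inl ()`. -/
abbrev cone (H : SimpleGraph W) : SimpleGraph (Unit ⊕ Unit × W) := corona (⊥ : SimpleGraph Unit) H

@[simp] theorem corona_adj_inl_inr {u : V} {p : V × W} :
    (corona G H).Adj (.inl u) (.inr p) ↔ u = p.1 :=
  Iff.rfl

def coneEmb (v : V) : Unit ⊕ Unit × W → V ⊕ V × W := Sum.map (fun _ => v) (fun p => (v, p.2))

theorem coneEmb_injective (v : V) : Function.Injective (coneEmb (W := W) v) :=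
  Sum.map_injective.mpr
    ⟨fun _ _ _ => rfl, fun _ _ h => Prod.ext (Subsingleton.elim _ _) (Prod.ext_iff.mp h).2⟩

open Classical in
/-- The copy of the cone at `v` is colored by `cK` shifted by `t v`; the `else 0` branch is never
an edge of the corona. -/
noncomputable def coronaColoring (cG : Sym2 V → ℤ) (cK : Sym2 (Unit ⊕ Unit × W) → ℤ) (t : V → ℤ) :
    Sym2 (V ⊕ V × W) → ℤ :=
  Sym2.lift ⟨fun x y => match x, y with
    | .inl u, .inl u' => cG s(u, u')
    | .inl _, .inr p => t p.1 + cK s(.inl (), .inr ((), p.2))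
    | .inr p, .inl _ => t p.1 + cK s(.inl (), .inr ((), p.2))
    | .inr p, .inr p' => if p.1 = p'.1 then t p.1 + cK s(.inr ((), p.2), .inr ((), p'.2)) else 0,
    by
      rintro (u | p) (u' | p')
      · exact congrArg cG Sym2.eq_swap
      · rfl
      · rfl
      · dsimp only
        by_cases h : p.1 = p'.1
        · rw [if_pos h, if_pos h.symm, h, Sym2.eq_swap]
        · rw [if_neg h, if_neg (Ne.symm h)]⟩

variable (cG : Sym2 V → ℤ) (cK : Sym2 (Unit ⊕ Unit × W) → ℤ) (t : V → ℤ)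

theorem colorNeighbors_corona_inr (v : V) (w : W) (q : ℤ) :
    colorNeighbors (corona G H) (coronaColoring cG cK t) (.inr (v, w)) q =
      coneEmb v '' colorNeighbors (cone H) cK (.inr ((), w)) (q - t v) := by
  ext y
  constructor
  · rintro ⟨hadj, rfl⟩
    rcases y with u | ⟨v', w'⟩
    · obtain rfl : u = v := hadj
      exact ⟨.inl (), ⟨rfl, by simp [coronaColoring, Sym2.eq_swap]⟩, rfl⟩
    · obtain ⟨rfl, hw⟩ := hadj
      exact ⟨.inr ((), w'), ⟨⟨rfl, hw⟩, by simp [coronaColoring]⟩, rfl⟩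
  · rintro ⟨⟨⟩ | ⟨⟨⟩, w'⟩, ⟨hadj, hq⟩, rfl⟩
    · refine ⟨rfl, ?_⟩
      show t v + cK s(.inl (), .inr ((), w)) = q
      rw [Sym2.eq_swap] at hq
      linear_combination hq
    · refine ⟨⟨rfl, hadj.2⟩, ?_⟩
      simp only [coneEmb, Sum.map_inr, coronaColoring, Sym2.lift_mk, if_true]
      linear_combination hq

theorem colorNeighbors_corona_inl (v : V) (q : ℤ) :
    colorNeighbors (corona G H) (coronaColoring cG cK t) (.inl v) q =
      .inl '' colorNeighbors G cG v q ∪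
        coneEmb v '' colorNeighbors (cone H) cK (.inl ()) (q - t v) := by
  ext y
  constructor
  · rintro ⟨hadj, rfl⟩
    rcases y with u | ⟨v', w'⟩
    · exact Or.inl ⟨u, ⟨hadj, rfl⟩, rfl⟩
    · obtain rfl : v = v' := hadj
      exact Or.inr ⟨.inr ((), w'), ⟨rfl, by simp [coronaColoring]⟩, rfl⟩
  · rintro (⟨u, ⟨hadj, rfl⟩, rfl⟩ | ⟨⟨⟩ | ⟨⟨⟩, w'⟩, ⟨hadj, hq⟩, rfl⟩)
    · exact ⟨hadj, rfl⟩
    · exact absurd hadj (by simp)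
    · refine ⟨rfl, ?_⟩
      show t v + cK s(.inl (), .inr ((), w')) = q
      linear_combination hq

variable {cG cK t}

theorem colorsAt_corona_inr (v : V) (w : W) :
    colorsAt (corona G H) (coronaColoring cG cK t) (.inr (v, w)) =
      (· - t v) ⁻¹' colorsAt (cone H) cK (.inr ((), w)) := by
  ext q
  simp only [colorsAt, mem_ofPred_eq, mem_preimage, colorNeighbors_corona_inr, image_nonempty]

theorem colorsAt_corona_inl (v : V) :
    colorsAt (corona G H) (coronaColoring cG cK t) (.inl v) =
      colorsAt G cG v ∪ (· - t v) ⁻¹' colorsAt (cone H) cK (.inl ()) := by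
  ext q
  simp only [colorsAt, mem_ofPred_eq, mem_preimage, mem_union, colorNeighbors_corona_inl,
    union_nonempty, image_nonempty]

section Shift

variable (hlt : ∀ v, ∀ a ∈ colorsAt G cG v, ∀ b ∈ colorsAt (cone H) cK (.inl ()), a < t v + b)
include hlt

theorem isIntervalColoring_coronaColoring (hG : IsIntervalColoring G cG)
    (hK : IsIntervalColoring (cone H) cK)
    (hgap : ∀ v, (colorsAt G cG v).Nonempty → (colorsAt (cone H) cK (.inl ())).Nonempty →
      ∃ a ∈ colorsAt G cG v, a + 1 - t v ∈ colorsAt (cone H) cK (.inl ())) :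
    IsIntervalColoring (corona G H) (coronaColoring cG cK t) := by
  rw [isIntervalColoring_iff_ordConnected] at *
  have hmono (v : V) : Monotone (· - t v) := fun _ _ h => sub_le_sub_right h _
  rintro (v | ⟨v, w⟩)
  · rw [colorsAt_corona_inl]
    refine Int.ordConnected_union (hG v) ((hK _).preimage_mono (hmono v))
      (fun a ha b hb => by have := hlt v a ha _ hb; dsimp only at this; omega) fun hS hT => ?_
    obtain ⟨b, hb⟩ := hT
    exact hgap v hS ⟨_, hb⟩
  · rw [colorsAt_corona_inr]
    exact (hK _).preimage_mono (hmono v)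

theorem isKImproper_coronaColoring {m n : ℕ} (hG : IsKImproper G cG m)
    (hK : IsKImproper (cone H) cK n) :
    IsKImproper (corona G H) (coronaColoring cG cK t) (max m n) := by
  rintro (v | ⟨v, w⟩) q
  · change (colorNeighbors _ _ _ _).ncard ≤ _
    rw [colorNeighbors_corona_inl]
    rcases (colorNeighbors G cG v q).eq_empty_or_nonempty with hG0 | ⟨u, hu⟩
    · rw [hG0, image_empty, empty_union, ncard_image_of_injective _ (coneEmb_injective v)]
      exact (hK _ _).trans (le_max_right m n)
    · have hK0 : colorNeighbors (cone H) cK (.inl ()) (q - t v) = ∅ :=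
        eq_empty_of_forall_notMem fun b hb => by
          have := hlt v q ⟨u, hu⟩ (q - t v) ⟨b, hb⟩
          omega
      rw [hK0, image_empty, union_empty, ncard_image_of_injective _ Sum.inl_injective]
      exact (hG v q).trans (le_max_left m n)
  · change (colorNeighbors _ _ _ _).ncard ≤ _
    rw [colorNeighbors_corona_inr, ncard_image_of_injective _ (coneEmb_injective v)]
    exact (hK _ _).trans (le_max_right m n)

end Shift

theorem impropriety_corona_le_max [Finite V] [Finite W] (G : SimpleGraph V) (H : SimpleGraph W) :
    impropriety (corona G H) ≤ max (impropriety G) (impropriety (cone H)) := by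
  obtain ⟨cG, hGint, hGimp⟩ := exists_isIntervalColoring_isKImproper_impropriety G
  obtain ⟨cK, hKint, hKimp⟩ := exists_isIntervalColoring_isKImproper_impropriety (cone H)
  -- the colors of the `v`-th cone start right after the largest color of `G` at `v`
  set t : V → ℤ :=
    fun v => sSup (colorsAt G cG v) + 1 - sInf (colorsAt (cone H) cK (.inl ())) with ht
  have hlt : ∀ v, ∀ a ∈ colorsAt G cG v, ∀ b ∈ colorsAt (cone H) cK (.inl ()), a < t v + b :=
    fun v a ha b hb => by
      have := le_csSup (finite_colorsAt G cG v).bddAbove ha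
      have := csInf_le (finite_colorsAt _ cK _).bddBelow hb
      simp only [ht]
      omega
  refine impropriety_le _ (coronaColoring cG cK t)
    (isIntervalColoring_coronaColoring hlt hGint hKint fun v hS hT => ?_)
    (isKImproper_coronaColoring hlt hGimp hKimp)
  refine ⟨_, hS.csSup_mem (finite_colorsAt G cG v), ?_⟩
  convert hT.csInf_mem (finite_colorsAt _ cK _) using 1
  simp only [ht]
  omega

end Corona

section DeeperLabel

/-- The value `0` on edges between vertices of equal depth is junk: no such edge occurs below. -/
def deeperLabel {X : Type*} (d : X → ℕ) (g : X → ℤ) : Sym2 X → ℤ :=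
  Sym2.lift ⟨fun a b => if d a < d b then g b else if d b < d a then g a else 0, fun a b => by
    dsimp only; split_ifs <;> first | rfl | omega⟩

variable {X : Type*} (d : X → ℕ) (g : X → ℤ) {a b : X}

theorem deeperLabel_of_lt (h : d a < d b) : deeperLabel d g s(a, b) = g b := if_pos h

theorem deeperLabel_of_gt (h : d b < d a) : deeperLabel d g s(a, b) = g a := by
  rw [Sym2.eq_swap]; exact if_pos h

end DeeperLabel

section ConeColoring

variable {W : Type*} {H : SimpleGraph W} (d : W → ℕ) (g : W → ℤ)

/-- An apex edge gets the label of its `H`-endpoint, an edge of `H` the label of its deeper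
endpoint. -/
def coneColoring : Sym2 (Unit ⊕ Unit × W) → ℤ :=
  deeperLabel (Sum.elim (fun _ => 0) (fun p => d p.2 + 1)) (Sum.elim (fun _ => 0) (fun p => g p.2))

theorem coneColoring_inr_inl (p : Unit × W) (u : Unit) :
    coneColoring d g s(.inr p, .inl u) = g p.2 :=
  deeperLabel_of_gt _ _ (Nat.succ_pos _)

theorem coneColoring_inr_inr (p p' : Unit × W) :
    coneColoring d g s(.inr p, .inr p') = deeperLabel d g s(p.2, p'.2) := by
  simp [coneColoring, deeperLabel]

theorem colorNeighbors_cone_inl (u : Unit) (q : ℤ) :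
    colorNeighbors (cone H) (coneColoring d g) (.inl u) q =
      (fun w => .inr ((), w)) '' {w | g w = q} := by
  ext (_ | ⟨⟨⟩, w⟩)
  · simp [colorNeighbors]
  · simp [colorNeighbors, Sym2.eq_swap (a := Sum.inl u), coneColoring_inr_inl]

theorem colorNeighbors_cone_inr_subset (w : W) (q : ℤ) :
    colorNeighbors (cone H) (coneColoring d g) (.inr ((), w)) q ⊆
      insert (.inl ()) ((fun x => .inr ((), x)) ''
        {x | H.Adj w x ∧ deeperLabel d g s(w, x) = q}) := by
  rintro (⟨⟩ | ⟨⟨⟩, x⟩) ⟨hadj, hq⟩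
  · exact mem_insert _ _
  · exact mem_insert_of_mem _ ⟨x, ⟨hadj.2, by rwa [coneColoring_inr_inr] at hq⟩, rfl⟩

theorem colorsAt_cone_inl (u : Unit) :
    colorsAt (cone H) (coneColoring d g) (.inl u) = range g := by
  ext q
  simp [colorsAt, colorNeighbors_cone_inl, Set.Nonempty]

theorem colorsAt_cone_inr (w : W) :
    colorsAt (cone H) (coneColoring d g) (.inr ((), w)) =
      insert (g w) ((fun x => deeperLabel d g s(w, x)) '' H.neighborSet w) := by
  ext q
  constructor
  · rintro ⟨⟨⟩ | ⟨⟨⟩, x⟩, hadj, rfl⟩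
    · exact Or.inl (coneColoring_inr_inl d g _ _)
    · exact Or.inr ⟨x, hadj.2, (coneColoring_inr_inr d g ((), w) ((), x)).symm⟩
  · rintro (rfl | ⟨x, hx, rfl⟩)
    · exact ⟨.inl (), rfl, coneColoring_inr_inl d g _ _⟩
    · exact ⟨.inr ((), x), ⟨rfl, hx⟩, coneColoring_inr_inr d g _ _⟩

variable {d g}

theorem isIntervalColoring_coneColoring (hrange : (range g).OrdConnected)
    (hlocal : ∀ w,
      (insert (g w) ((fun x => deeperLabel d g s(w, x)) '' H.neighborSet w)).OrdConnected) :
    IsIntervalColoring (cone H) (coneColoring d g) := by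
  rw [isIntervalColoring_iff_ordConnected]
  rintro (u | ⟨⟨⟩, w⟩)
  · rwa [colorsAt_cone_inl]
  · rw [colorsAt_cone_inr]
    exact hlocal w

theorem isKImproper_coneColoring (hfiber : ∀ q, {w | g w = q}.ncard ≤ 2)
    (hinj : ∀ w, (H.neighborSet w).InjOn fun x => deeperLabel d g s(w, x)) :
    IsKImproper (cone H) (coneColoring d g) 2 := by
  have hemb : Function.Injective fun x : W => (.inr ((), x) : Unit ⊕ Unit × W) :=
    fun _ _ h => by simpa using h
  rintro (u | ⟨⟨⟩, w⟩) q <;> change (colorNeighbors _ _ _ _).ncard ≤ 2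
  · rw [colorNeighbors_cone_inl, ncard_image_of_injective _ hemb]
    exact hfiber q
  · have hsub : {x | H.Adj w x ∧ deeperLabel d g s(w, x) = q}.Subsingleton :=
      fun x hx y hy => hinj w hx.1 hy.1 (hx.2.trans hy.2.symm)
    calc _ ≤ (insert (.inl ()) ((fun x => .inr ((), x)) ''
            {x | H.Adj w x ∧ deeperLabel d g s(w, x) = q})).ncard :=
          ncard_le_ncard (colorNeighbors_cone_inr_subset d g w q) ((hsub.image _).finite.insert _)
      _ ≤ _ + 1 := ncard_insert_le _ _
      _ ≤ 1 + 1 := by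
          grw [ncard_image_of_injective _ hemb, (ncard_le_one_iff hsub.finite).mpr (hsub · ·)]

end ConeColoring

namespace SimpleGraph

variable {W : Type*} {H : SimpleGraph W} {r v p₁ p₂ : W}

theorem Connected.exists_adj_dist_add_one_eq (hH : H.Connected) (hv : v ≠ r) :
    ∃ p, H.Adj v p ∧ H.dist r p + 1 = H.dist r v := by
  obtain ⟨q, hq⟩ := hH.exists_walk_length_eq_dist v r
  cases q with
  | nil => exact absurd rfl hv
  | cons hadj q =>
    rename_i p
    refine ⟨_, hadj, le_antisymm ?_ ?_⟩
    · have := dist_le q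
      rw [Walk.length_cons, dist_comm] at hq
      rw [dist_comm]
      omega
    · have := hH.dist_triangle (u := r) (v := p) (w := v)
      rwa [dist_eq_one_iff_adj.mpr hadj.symm] at this

theorem IsTree.eq_of_adj_of_dist_add_one_eq (hH : H.IsTree) (h₁ : H.Adj v p₁)
    (hd₁ : H.dist r p₁ + 1 = H.dist r v) (h₂ : H.Adj v p₂) (hd₂ : H.dist r p₂ + 1 = H.dist r v) :
    p₁ = p₂ := by
  classical
  have shortest (p : W) (h : H.Adj p v) (hd : H.dist r p + 1 = H.dist r v) :
      ∃ q : H.Walk r p, (q.concat h).IsPath := by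
    obtain ⟨q, hq, hl⟩ := hH.connected.exists_path_of_dist r p
    refine ⟨q, hq.concat (fun hv => ?_) h⟩
    have := dist_le (q.takeUntil v hv)
    have := q.length_takeUntil_le_length hv
    omega
  obtain ⟨q₁, hq₁⟩ := shortest p₁ h₁.symm hd₁
  obtain ⟨q₂, hq₂⟩ := shortest p₂ h₂.symm hd₂
  have := (hH.isAcyclic.subsingleton_path r v).elim ⟨_, hq₁⟩ ⟨_, hq₂⟩
  exact (Walk.concat_inj (congrArg Subtype.val this)).1

theorem Connected.eq_of_adj_of_dist_eq_add_one [Finite W] (hH : H.Connected) {x₁ x₂ : W}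
    (hv : v ≠ r) (hdeg : (H.neighborSet v).ncard ≤ 2) (h₁ : H.Adj v x₁)
    (hd₁ : H.dist r x₁ = H.dist r v + 1) (h₂ : H.Adj v x₂) (hd₂ : H.dist r x₂ = H.dist r v + 1) :
    x₁ = x₂ := by
  by_contra hne
  obtain ⟨p, hp, hdp⟩ := hH.exists_adj_dist_add_one_eq hv
  have hsub : ({p, x₁, x₂} : Set W) ⊆ H.neighborSet v := by
    rintro _ (rfl | rfl | rfl) <;> assumption
  have hp₁ : p ≠ x₁ := by rintro rfl; omega
  have hp₂ : p ≠ x₂ := by rintro rfl; omega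
  have := ncard_le_ncard hsub (toFinite _)
  rw [ncard_insert_of_notMem (by simp [hp₁, hp₂]), ncard_pair hne] at this
  omega

open Classical in
noncomputable def toward (H : SimpleGraph W) (r v : W) : W :=
  if h : ∃ p, H.Adj v p ∧ H.dist r p + 1 = H.dist r v then h.choose else v

theorem Connected.toward_spec (hH : H.Connected) (hv : v ≠ r) :
    H.Adj v (H.toward r v) ∧ H.dist r (H.toward r v) + 1 = H.dist r v := by
  have h := hH.exists_adj_dist_add_one_eq hv
  rw [toward, dif_pos h]
  exact h.choose_spec

theorem IsTree.toward_eq (hH : H.IsTree) (h : H.Adj v p₁) (hd : H.dist r p₁ + 1 = H.dist r v) :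
    H.toward r v = p₁ := by
  have hv : v ≠ r := by rintro rfl; simp at hd
  obtain ⟨h', hd'⟩ := hH.connected.toward_spec hv
  exact hH.eq_of_adj_of_dist_add_one_eq h' hd' h hd

theorem IsTree.toward_eq_toward_of_adj (hH : H.IsTree) {c w x : W} (hw : w ≠ c)
    (hx : H.Adj w x) (hd : H.dist c x = H.dist c w + 1) : H.toward x c = H.toward w c := by
  obtain ⟨hℓ, hdℓ⟩ := hH.connected.toward_spec (r := w) hw.symm
  refine hH.toward_eq hℓ ?_
  have h₁ := hH.connected.dist_triangle (u := x) (v := w) (w := H.toward w c)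
  have h₂ := hH.connected.dist_triangle (u := x) (v := H.toward w c) (w := c)
  have : H.dist x w = 1 := dist_eq_one_iff_adj.mpr hx.symm
  have : H.dist (H.toward w c) c = 1 := dist_eq_one_iff_adj.mpr hℓ.symm
  have : H.dist w c = H.dist c w := dist_comm
  have : H.dist x c = H.dist c x := dist_comm
  omega

theorem IsTree.eq_of_toward_eq_of_dist_eq [Finite W] (hH : H.IsTree) {c : W}
    (hdeg : ∀ w, w ≠ c → (H.neighborSet w).ncard ≤ 2) {w₁ w₂ : W} (h₁ : w₁ ≠ c) (h₂ : w₂ ≠ c)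
    (hbranch : H.toward w₁ c = H.toward w₂ c) (hd : H.dist c w₁ = H.dist c w₂) : w₁ = w₂ := by
  induction hn : H.dist c w₁ generalizing w₁ w₂ with
  | zero => exact absurd hn (hH.connected.pos_dist_of_ne h₁.symm).ne'
  | succ n ih =>
    rcases Nat.eq_zero_or_pos n with rfl | hn0
    · have hself (w : W) (hw : H.dist c w = 1) : H.toward w c = w :=
        hH.toward_eq (dist_eq_one_iff_adj.mp hw) (by simp [dist_comm, hw])
      rw [← hself w₁ hn, ← hself w₂ (hd ▸ hn), hbranch]
    · have hne (p : W) (hp : H.dist c p = n) : p ≠ c := by rintro rfl; simp at hp; omega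
      obtain ⟨hp₁, hdp₁⟩ := hH.connected.toward_spec h₁
      obtain ⟨hp₂, hdp₂⟩ := hH.connected.toward_spec h₂
      have hpar : H.toward c w₁ = H.toward c w₂ := by
        refine ih (hne _ (by omega)) (hne _ (by omega)) ?_ (by omega) (by omega)
        rw [← hH.toward_eq_toward_of_adj (hne _ (by omega)) hp₁.symm (by omega),
          ← hH.toward_eq_toward_of_adj (hne _ (by omega)) hp₂.symm (by omega), hbranch]
      exact hH.connected.eq_of_adj_of_dist_eq_add_one (hne _ (by omega))
        (hdeg _ (hne _ (by omega))) hp₁.symm (by omega) (hpar ▸ hp₂.symm) (by omega)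

end SimpleGraph

def legLabel : Fin 4 → ℕ → ℤ
  | 0, n => n - 1
  | 1, n => n
  | 2, n => -n
  | 3, n => -n - 1

theorem legLabel_succ (i : Fin 4) (n : ℕ) :
    legLabel i (n + 1) = legLabel i n + 1 ∨ legLabel i (n + 1) = legLabel i n - 1 := by
  fin_cases i <;> simp [legLabel] <;> omega

theorem legLabel_succ_sub_sign (i : Fin 4) {n : ℕ} (hn : 1 ≤ n) :
    legLabel i (n + 1) - (legLabel i (n + 1)).sign = legLabel i n := by
  fin_cases i <;> simp only [legLabel]
  all_goals first
    | rw [Int.sign_eq_one_of_pos (by omega)]; push_cast; ring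
    | rw [Int.sign_eq_neg_one_of_neg (by omega)]; push_cast; ring

theorem legLabel_one_sub_sign (i : Fin 4) :
    legLabel i 1 - (legLabel i 1).sign = 0 ∨
      legLabel i 1 - (legLabel i 1).sign = legLabel 2 1 := by
  fin_cases i <;> decide

theorem legLabel_one_injective : Function.Injective (legLabel · 1) := by
  decide

theorem legLabel_eq_legLabel {i j : Fin 4} {m n : ℕ} (hm : i = 1 ∨ 1 ≤ m) (hn : j = 1 ∨ 1 ≤ n)
    (hij : i.val % 2 = j.val % 2) (h : legLabel i m = legLabel j n) : i = j ∧ m = n := by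
  fin_cases i <;> fin_cases j <;> simp [legLabel] at * <;> omega

section SpiderLabel

variable {W : Type*} {H : SimpleGraph W} {c ℓ : W} {τ : W → Fin 4}

open Classical in
/-- `H.toward w c` is the neighbor of the center on the leg through `w`. The center itself counts
as depth `0` of a leg of type `1`, which gives it the label `legLabel 1 0 = 0`. -/
noncomputable def spiderType (H : SimpleGraph W) (c : W) (τ : W → Fin 4) (w : W) : Fin 4 :=
  if w = c then 1 else τ (H.toward w c)

noncomputable def spiderLabel (H : SimpleGraph W) (c : W) (τ : W → Fin 4) (w : W) : ℤ :=
  legLabel (spiderType H c τ w) (H.dist c w)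

theorem spiderLabel_center : spiderLabel H c τ c = 0 := by
  simp [spiderLabel, spiderType, legLabel]

theorem spiderType_of_ne {w : W} (hw : w ≠ c) : spiderType H c τ w = τ (H.toward w c) :=
  if_neg hw

variable (hT : H.IsTree)
include hT

theorem spiderLabel_of_adj_center (hℓ : H.Adj c ℓ) :
    spiderLabel H c τ ℓ = legLabel (τ ℓ) 1 := by
  have hd : H.dist c ℓ = 1 := dist_eq_one_iff_adj.mpr hℓ
  rw [spiderLabel, spiderType_of_ne hℓ.ne', hT.toward_eq hℓ (by simp [dist_comm, hd]), hd]

theorem spiderType_of_adj_of_dist_eq {w x : W} (hw : w ≠ c) (hx : H.Adj w x)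
    (hd : H.dist c x = H.dist c w + 1) : spiderType H c τ x = spiderType H c τ w := by
  have hxc : x ≠ c := by rintro rfl; simp at hd
  rw [spiderType_of_ne hw, spiderType_of_ne hxc, hT.toward_eq_toward_of_adj hw hx hd]

theorem spiderLabel_of_adj_of_dist_eq {w x : W} (hw : w ≠ c) (hx : H.Adj w x)
    (hd : H.dist c x = H.dist c w + 1) :
    spiderLabel H c τ x = spiderLabel H c τ w + 1 ∨
      spiderLabel H c τ x = spiderLabel H c τ w - 1 := by
  rw [spiderLabel, spiderLabel, spiderType_of_adj_of_dist_eq hT hw hx hd, hd]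
  exact legLabel_succ _ _

/-- A leg of type `2` supplies the label `-1` that the first vertex of a leg of type `3` needs. -/
theorem spiderLabel_sub_sign_mem_range (hℓ : H.Adj c ℓ) (hτℓ : τ ℓ = 2) (w : W) :
    spiderLabel H c τ w - (spiderLabel H c τ w).sign ∈ range (spiderLabel H c τ) := by
  by_cases hw : w = c
  · subst hw
    exact ⟨w, by simp [spiderLabel_center]⟩
  obtain ⟨hp, hdp⟩ := hT.connected.toward_spec hw
  rcases Nat.lt_or_ge (H.dist c w) 2 with hlt | hge
  · have hd : H.dist c w = 1 := by
      have := hT.connected.pos_dist_of_ne (Ne.symm hw); omega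
    rw [spiderLabel, hd]
    rcases legLabel_one_sub_sign (spiderType H c τ w) with h | h <;> rw [h]
    · exact ⟨c, spiderLabel_center⟩
    · exact ⟨ℓ, by rw [spiderLabel_of_adj_center hT hℓ, hτℓ]⟩
  · have hpc : H.toward c w ≠ c := by rintro h; rw [h] at hdp; simp at hdp; omega
    refine ⟨H.toward c w, ?_⟩
    rw [spiderLabel, spiderLabel, ← spiderType_of_adj_of_dist_eq hT hpc hp.symm hdp.symm,
      ← hdp, legLabel_succ_sub_sign _ (by omega)]

theorem ordConnected_range_spiderLabel (hℓ : H.Adj c ℓ) (hτℓ : τ ℓ = 2) :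
    (range (spiderLabel H c τ)).OrdConnected :=
  Int.ordConnected_of_sub_sign_mem ⟨c, spiderLabel_center⟩ <| by
    rintro _ ⟨w, rfl⟩
    exact spiderLabel_sub_sign_mem_range hT hℓ hτℓ w

theorem ordConnected_spiderLabel_local (hℓ : H.Adj c ℓ) (hτℓ : τ ℓ = 2) (w : W) :
    (insert (spiderLabel H c τ w) ((fun x => deeperLabel (H.dist c) (spiderLabel H c τ) s(w, x)) ''
      H.neighborSet w)).OrdConnected := by
  by_cases hw : w = c
  · subst hw
    have hcenter {x : W} (hx : H.Adj w x) :
        deeperLabel (H.dist w) (spiderLabel H w τ) s(w, x) = legLabel (τ x) 1 := by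
      rw [deeperLabel_of_lt _ _ (by simp [dist_eq_one_iff_adj.mpr hx]),
        spiderLabel_of_adj_center hT hx]
    refine Int.ordConnected_of_sub_sign_mem (by simp [spiderLabel_center]) ?_
    rintro _ (h | ⟨x, hx, rfl⟩)
    · simp [h, spiderLabel_center]
    · dsimp only
      rw [hcenter hx]
      rcases legLabel_one_sub_sign (τ x) with h | h <;> rw [h]
      · exact Or.inl spiderLabel_center.symm
      · exact Or.inr ⟨ℓ, hℓ, by dsimp only; rw [hcenter hℓ, hτℓ]⟩
  · refine Int.ordConnected_of_mem_of_subset_Icc (mem_insert _ _) ?_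
    rintro _ (h | ⟨x, hx, rfl⟩)
    · rw [h]; constructor <;> omega
    · dsimp only
      rcases hT.dist_eq_dist_add_one_of_adj c hx with hd | hd
      · rw [deeperLabel_of_gt _ _ (hd ▸ Nat.lt_succ_self _)]; constructor <;> omega
      · rw [deeperLabel_of_lt _ _ (hd ▸ Nat.lt_succ_self _)]
        rcases spiderLabel_of_adj_of_dist_eq hT hw hx hd with h | h <;> rw [h] <;>
          constructor <;> omega

variable [Finite W] (hdeg : ∀ w, w ≠ c → (H.neighborSet w).ncard ≤ 2)
  (hτ : (H.neighborSet c).InjOn τ)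
include hdeg hτ

theorem spiderType_dist_injective :
    Function.Injective fun w => (spiderType H c τ w, H.dist c w) := by
  intro w₁ w₂ h
  obtain ⟨ht, hd⟩ := Prod.ext_iff.mp h
  dsimp only at ht hd
  have hpos {w : W} (hw : w ≠ c) : 0 < H.dist c w := hT.connected.pos_dist_of_ne (Ne.symm hw)
  by_cases h₁ : w₁ = c <;> by_cases h₂ : w₂ = c
  · rw [h₁, h₂]
  · rw [h₁, dist_self] at hd; have := hpos h₂; omega
  · rw [h₂, dist_self] at hd; have := hpos h₁; omega
  · rw [spiderType_of_ne h₁, spiderType_of_ne h₂] at ht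
    refine hT.eq_of_toward_eq_of_dist_eq hdeg h₁ h₂ (hτ ?_ ?_ ht) hd
    · exact (hT.connected.toward_spec (Ne.symm h₁)).1
    · exact (hT.connected.toward_spec (Ne.symm h₂)).1

/-- Within a fiber of the labeling, the parity of the leg type tells the vertices apart. -/
theorem ncard_spiderLabel_eq_le_two (q : ℤ) : {w | spiderLabel H c τ w = q}.ncard ≤ 2 := by
  have hdepth (w : W) : spiderType H c τ w = 1 ∨ 1 ≤ H.dist c w := by
    by_cases hw : w = c
    · exact Or.inl (by simp [spiderType, hw])
    · exact Or.inr (hT.connected.pos_dist_of_ne (Ne.symm hw))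
  calc _ ≤ ({0, 1} : Set ℕ).ncard := by
        refine ncard_le_ncard_of_injOn (fun w => (spiderType H c τ w).val % 2)
          (fun w _ => by simp; omega) (fun w₁ h₁ w₂ h₂ hpar => ?_) (toFinite _)
        obtain ⟨ht, hd⟩ := legLabel_eq_legLabel (hdepth w₁) (hdepth w₂) hpar (h₁.trans h₂.symm)
        exact spiderType_dist_injective hT hdeg hτ (Prod.ext ht hd)
    _ = 2 := ncard_pair (by norm_num)

theorem injOn_deeperLabel_spiderLabel (w : W) :
    (H.neighborSet w).InjOn fun x => deeperLabel (H.dist c) (spiderLabel H c τ) s(w, x) := by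
  intro x₁ hx₁ x₂ hx₂ h
  dsimp only at h
  by_cases hw : w = c
  · subst hw
    rw [deeperLabel_of_lt _ _ (by simp [dist_eq_one_iff_adj.mpr hx₁]),
      deeperLabel_of_lt _ _ (by simp [dist_eq_one_iff_adj.mpr hx₂]),
      spiderLabel_of_adj_center hT hx₁, spiderLabel_of_adj_center hT hx₂] at h
    exact hτ hx₁ hx₂ (legLabel_one_injective h)
  rcases hT.dist_eq_dist_add_one_of_adj c hx₁ with hd₁ | hd₁ <;>
    rcases hT.dist_eq_dist_add_one_of_adj c hx₂ with hd₂ | hd₂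
  · exact hT.eq_of_adj_of_dist_add_one_eq hx₁ hd₁.symm hx₂ hd₂.symm
  · rw [deeperLabel_of_gt _ _ (hd₁ ▸ Nat.lt_succ_self _),
      deeperLabel_of_lt _ _ (hd₂ ▸ Nat.lt_succ_self _)] at h
    rcases spiderLabel_of_adj_of_dist_eq (τ := τ) hT hw hx₂ hd₂ with h' | h' <;> omega
  · rw [deeperLabel_of_lt _ _ (hd₁ ▸ Nat.lt_succ_self _),
      deeperLabel_of_gt _ _ (hd₂ ▸ Nat.lt_succ_self _)] at h
    rcases spiderLabel_of_adj_of_dist_eq (τ := τ) hT hw hx₁ hd₁ with h' | h' <;> omega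
  · exact hT.connected.eq_of_adj_of_dist_eq_add_one hw (hdeg w hw) hx₁ hd₁ hx₂ hd₂

end SpiderLabel

theorem impropriety_cone_le_two_of_isSpider {W : Type*} [Finite W] {H : SimpleGraph W} {c : W}
    {k : ℕ} (hH : IsSpider H c k) (hk4 : k ≤ 4) : impropriety (cone H) ≤ 2 := by
  obtain ⟨hT, hk, hk3, hdeg⟩ := hH
  obtain ⟨ℓ, hℓ⟩ : (H.neighborSet c).Nonempty := nonempty_of_ncard_ne_zero (by omega)
  obtain ⟨τ, hτ, hτℓ⟩ :=
    (toFinite (H.neighborSet c)).exists_injOn_fin_apply_eq (hk.trans_le hk4) ℓ 2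
  exact impropriety_le _ _
    (isIntervalColoring_coneColoring (ordConnected_range_spiderLabel hT hℓ hτℓ)
      (ordConnected_spiderLabel_local hT hℓ hτℓ))
    (isKImproper_coneColoring (ncard_spiderLabel_eq_le_two hT hdeg hτ)
      (injOn_deeperLabel_spiderLabel hT hdeg hτ))

theorem stmt15_general {V W : Type*} [Fintype V] [Fintype W] (G : SimpleGraph V)
    (H : SimpleGraph W) (c : W) (k : ℕ) (hH : IsSpider H c k)
    (hk4 : k ≤ 4) :
    impropriety (corona G H) ≤ max 2 (impropriety G) :=
  calc impropriety (corona G H) ≤ max (impropriety G) (impropriety (cone H)) :=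
        impropriety_corona_le_max G H
    _ ≤ max 2 (impropriety G) := by
        rw [max_comm]; exact max_le_max (impropriety_cone_le_two_of_isSpider hH hk4) le_rfl

/-- For any graph `G` and any spider graph `H` whose center has degree `k` with
`3 ≤ k ≤ 4`, `μ_int(G ⊙ H) ≤ max {2, μ_int(G)}`. -/
theorem stmt15 {V W : Type*} [Fintype V] [Fintype W] (G : SimpleGraph V)
    (H : SimpleGraph W) (c : W) (k : ℕ) (hH : IsSpider H c k)
    (hk3 : 3 ≤ k) (hk4 : k ≤ 4) :
    impropriety (corona G H) ≤ max 2 (impropriety G) :=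
  stmt15_general G H c k hH hk4
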